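/- Correctness of the parallel Rauch–Tung–Striebel smoother: under the linear-Gaussian model assumptions, suppose additionally that P_{k+1|k} = F_k P_{k|k} F_kᵀ + Q_k is invertible for k = 1, …, T−1, and define the smoothing elements a_k = (E_k, g_k, L_k) by E_k = P_{k|k} F_kᵀ (F_k P_{k|k} F_kᵀ + Q_k)⁻¹, g_k = x̄_{k|k} − E_k (F_k x̄_{k|k} + u_k), L_k = P_{k|k} − E_k F_k P_{k|k} for k < T, and a_T = (0, x̄_{T|T}, P_{T|T}). Then for every k = 1, …, T, the suffix product a_k ⊗ a_{k+1} ⊗ ⋯ ⊗ a_T under the smoothing operator has g-component equal to the RTS smoother mean x̄_{k|T} and L-component equal to the RTS smoother covariance P_{k|T}. -/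

import Mathlib

open Matrix

/-- A smoothing element over `ℝⁿ`. -/
structure SmoothingElem (n : ℕ) where
  E : Matrix (Fin n) (Fin n) ℝ
  g : Fin n → ℝ
  L : Matrix (Fin n) (Fin n) ℝ

/-- The smoothing operator
`(E_i, g_i, L_i) ⊗ (E_j, g_j, L_j) = (E_i E_j, E_i g_j + g_i, E_i L_j E_iᵀ + L_i)`. -/
def smoothOp {n : ℕ} (x y : SmoothingElem n) : SmoothingElem n where
  E := x.E * y.E
  g := x.E *ᵥ y.g + x.g
  L := x.E * y.L * x.Eᵀ + x.L

/-- The data of a linear-Gaussian state-space model. -/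
structure LGModel (n m : ℕ) where
  T : ℕ
  F : ℕ → Matrix (Fin n) (Fin n) ℝ
  H : ℕ → Matrix (Fin m) (Fin n) ℝ
  u : ℕ → Fin n → ℝ
  d : ℕ → Fin m → ℝ
  Q : ℕ → Matrix (Fin n) (Fin n) ℝ
  R : ℕ → Matrix (Fin m) (Fin m) ℝ
  y : ℕ → Fin m → ℝ
  x0 : Fin n → ℝ
  P0 : Matrix (Fin n) (Fin n) ℝ

variable {n m : ℕ}

/-- The Kalman filter recursion: `kf M k = (x̄_{k|k}, P_{k|k})`. -/
noncomputable def LGModel.kf (M : LGModel n m) : ℕ → (Fin n → ℝ) × Matrix (Fin n) (Fin n) ℝ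
  | 0 => (M.x0, M.P0)
  | k + 1 =>
    let prev := LGModel.kf M k
    let xp := M.F k *ᵥ prev.1 + M.u k
    let Pp := M.F k * prev.2 * (M.F k)ᵀ + M.Q k
    let S := M.H (k + 1) * Pp * (M.H (k + 1))ᵀ + M.R (k + 1)
    let K := Pp * (M.H (k + 1))ᵀ * S⁻¹
    (xp + K *ᵥ (M.y (k + 1) - M.H (k + 1) *ᵥ xp - M.d (k + 1)),
     Pp - K * M.H (k + 1) * Pp)

/-- The Rauch–Tung–Striebel backward recursion: `rts M j = (x̄_{T-j|T}, P_{T-j|T})`. -/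
noncomputable def LGModel.rts (M : LGModel n m) : ℕ → (Fin n → ℝ) × Matrix (Fin n) (Fin n) ℝ
  | 0 => M.kf M.T
  | j + 1 =>
    let k := M.T - j - 1
    let P := (M.kf k).2
    let Pp := M.F k * P * (M.F k)ᵀ + M.Q k
    let G := P * (M.F k)ᵀ * Pp⁻¹
    ((M.kf k).1 + G *ᵥ ((LGModel.rts M j).1 - (M.F k *ᵥ (M.kf k).1 + M.u k)),
     P + G * ((LGModel.rts M j).2 - Pp) * Gᵀ)

/-- The smoothing element `a_k = (E_k, g_k, L_k)` of the parallel RTS smoother. -/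
noncomputable def LGModel.selem (M : LGModel n m) (k : ℕ) : SmoothingElem n :=
  if k = M.T then
    { E := 0, g := (M.kf M.T).1, L := (M.kf M.T).2 }
  else
    let P := (M.kf k).2
    let E := P * (M.F k)ᵀ * (M.F k * P * (M.F k)ᵀ + M.Q k)⁻¹
    { E := E
      g := (M.kf k).1 - E *ᵥ (M.F k *ᵥ (M.kf k).1 + M.u k)
      L := P - E * M.F k * P }

/-- The suffix products of the smoothing elements under the smoothing operator:
`ssuff M j = a_{T-j} ⊗ a_{T-j+1} ⊗ ⋯ ⊗ a_T`. -/
noncomputable def LGModel.ssuff (M : LGModel n m) : ℕ → SmoothingElem n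
  | 0 => M.selem M.T
  | j + 1 => smoothOp (M.selem (M.T - j - 1)) (LGModel.ssuff M j)

/-!
Induction on the length of the suffix: for `k < T`, multiplying a suffix product `(E, g, L)`
on the left by `a_k` performs exactly one backward RTS step on `(g, L)`, with `E_k = G_k`.
For the mean this is linear algebra; for the covariance it rests on
`G_k P_{k+1|k} G_kᵀ = G_k F_k P_{k|k}`, which holds because `P_{k|k}` and `P_{k+1|k}` are
symmetric. Symmetry of the filter covariances propagates through the Kalman recursion from
that of `P_{0|0}`, the `Q_k` and the `R_k`.
-/

namespace Matrix

variable {ι κ R : Type*} [Fintype κ] [CommRing R]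

theorem IsSymm.mul_mul_transpose {A : Matrix κ κ R} (hA : A.IsSymm) (B : Matrix ι κ R) :
    (B * A * Bᵀ).IsSymm := by
  simp only [IsSymm, transpose_mul, transpose_transpose, hA.eq, Matrix.mul_assoc]

theorem IsSymm.sub_mul_transpose_mul_inv_mul_mul [Fintype ι] [DecidableEq κ] {P : Matrix ι ι R}
    (hP : P.IsSymm) (H : Matrix κ ι R) {S : Matrix κ κ R} (hS : S.IsSymm) :
    (P - P * Hᵀ * S⁻¹ * H * P).IsSymm := by
  have hdown := hS.inv.mul_mul_transpose (P * Hᵀ)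
  simp only [transpose_mul, transpose_transpose, hP.eq, ← Matrix.mul_assoc] at hdown
  exact hP.sub hdown

theorem mul_inv_mul_self_mul_transpose [DecidableEq κ] (A : Matrix ι κ R) {S : Matrix κ κ R}
    (hS : S.IsSymm) (hdet : IsUnit S.det) :
    A * S⁻¹ * S * (A * S⁻¹)ᵀ = A * S⁻¹ * Aᵀ := by
  rw [Matrix.mul_assoc A, nonsing_inv_mul _ hdet, Matrix.mul_one, transpose_mul, hS.inv.eq,
    Matrix.mul_assoc]

end Matrix

theorem LGModel.isSymm_kf_snd (M : LGModel n m) (hQ : ∀ k < M.T, (M.Q k).IsSymm)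
    (hR : ∀ k, 1 ≤ k → k ≤ M.T → (M.R k).IsSymm) (hP0 : M.P0.IsSymm) :
    ∀ k ≤ M.T, (M.kf k).2.IsSymm
  | 0, _ => hP0
  | k + 1, hk => by
    have hPp := ((M.isSymm_kf_snd hQ hR hP0 k (by omega)).mul_mul_transpose (M.F k)).add (hQ k hk)
    exact hPp.sub_mul_transpose_mul_inv_mul_mul (M.H (k + 1))
      ((hPp.mul_mul_transpose (M.H (k + 1))).add (hR (k + 1) (by omega) hk))

theorem LGModel.ssuff_eq_rts (M : LGModel n m) (hP : ∀ k < M.T, (M.kf k).2.IsSymm)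
    (hQ : ∀ k < M.T, (M.Q k).IsSymm)
    (hPp : ∀ k, 1 ≤ k → k ≤ M.T - 1 → IsUnit (M.F k * (M.kf k).2 * (M.F k)ᵀ + M.Q k)) :
    ∀ j ≤ M.T - 1, (M.ssuff j).g = (M.rts j).1 ∧ (M.ssuff j).L = (M.rts j).2
  | 0, _ => by simp [ssuff, rts, selem]
  | j + 1, hj => by
    obtain ⟨hg, hL⟩ := M.ssuff_eq_rts hP hQ hPp j (by omega)
    have hkT : M.T - j - 1 ≠ M.T := by omega
    set k := M.T - j - 1
    set P := (M.kf k).2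
    set Pp := M.F k * P * (M.F k)ᵀ + M.Q k
    have hPps : Pp.IsSymm := ((hP k (by omega)).mul_mul_transpose (M.F k)).add (hQ k (by omega))
    have hgain : P * (M.F k)ᵀ * Pp⁻¹ * Pp * (P * (M.F k)ᵀ * Pp⁻¹)ᵀ
        = P * (M.F k)ᵀ * Pp⁻¹ * M.F k * P := by
      rw [mul_inv_mul_self_mul_transpose _ hPps
        ((isUnit_iff_isUnit_det _).mp (hPp k (by omega) (by omega))),
        transpose_mul, transpose_transpose, (hP k (by omega)).eq, Matrix.mul_assoc _ (M.F k)]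
    show (smoothOp (M.selem k) (M.ssuff j)).g = _ ∧ (smoothOp (M.selem k) (M.ssuff j)).L = _
    simp only [smoothOp, selem, if_neg hkT, rts, hg, hL]
    constructor
    · rw [mulVec_sub]
      abel
    · rw [Matrix.mul_sub, Matrix.sub_mul, hgain]
      abel

theorem parallel_rts_smoother_correct_general (M : LGModel n m)
    (hQ : ∀ k, k < M.T → (M.Q k).PosSemidef)
    (hR : ∀ k, 1 ≤ k → k ≤ M.T → (M.R k).PosDef)
    (hP0 : M.P0.PosSemidef)
    (hPp : ∀ k, 1 ≤ k → k ≤ M.T - 1 → IsUnit (M.F k * (M.kf k).2 * (M.F k)ᵀ + M.Q k)) :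
    ∀ k, 1 ≤ k → k ≤ M.T →
      (M.ssuff (M.T - k)).g = (M.rts (M.T - k)).1 ∧
      (M.ssuff (M.T - k)).L = (M.rts (M.T - k)).2 := by
  have hQs : ∀ k < M.T, (M.Q k).IsSymm := fun k hk ↦
    isHermitian_iff_isSymm.mp (hQ k hk).isHermitian
  have hP := M.isSymm_kf_snd hQs
    (fun k hk₁ hk₂ ↦ isHermitian_iff_isSymm.mp (hR k hk₁ hk₂).isHermitian)
    (isHermitian_iff_isSymm.mp hP0.isHermitian)
  intro k hk₁ hk₂
  exact M.ssuff_eq_rts (fun k hk ↦ hP k hk.le) hQs hPp (M.T - k) (by omega)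

/-- Correctness of the parallel Rauch–Tung–Striebel smoother: under the linear-Gaussian
model assumptions, if additionally every predicted covariance
`P_{k+1|k} = F_k P_{k|k} F_kᵀ + Q_k` (for `k = 1, …, T-1`) is invertible, then for every
`k = 1, …, T` the suffix product `a_k ⊗ a_{k+1} ⊗ ⋯ ⊗ a_T` of the smoothing elements
has `g`-component equal to the RTS smoother mean `x̄_{k|T}` and `L`-component equal to
the RTS smoother covariance `P_{k|T}`. -/
theorem parallel_rts_smoother_correct (M : LGModel n m) (hT : 1 ≤ M.T)
    (hQ : ∀ k, k < M.T → (M.Q k).PosSemidef)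
    (hR : ∀ k, 1 ≤ k → k ≤ M.T → (M.R k).PosDef)
    (hP0 : M.P0.PosSemidef)
    (hPp : ∀ k, 1 ≤ k → k ≤ M.T - 1 → IsUnit (M.F k * (M.kf k).2 * (M.F k)ᵀ + M.Q k)) :
    ∀ k, 1 ≤ k → k ≤ M.T →
      (M.ssuff (M.T - k)).g = (M.rts (M.T - k)).1 ∧
      (M.ssuff (M.T - k)).L = (M.rts (M.T - k)).2 :=
  parallel_rts_smoother_correct_general M hQ hR hP0 hPp
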